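/- Let n ≥ 1, let A = (σ_{ij}) be an n×n matrix with nonnegative entries, set V = (1/n)·A⊙A, fix s > 0 and t > 0, and let (r, r̃) be the unique positive solution of the Regularized Master Equations for V. Define φ_i = t + (Vr̃)_i, φ̃_i = t + (Vᵀr)_i and ψ_i = 1/(s² + φ_i·φ̃_i) for i ∈ {1,…,n}, and let S ⊆ {1,…,n} be nonempty. Then the |S|×|S| matrix with entries δ_{ij}/ψ_i − V_{ji} (i, j ∈ S) is invertible; denoting its inverse W = (W_{ij})_{i,j∈S}, the following hold: (a) r_i = ∑_{j∈S} W_{ij}·(t + ∑_{k∉S} V_{kj}·r_k) for every i ∈ S, and r̃_j = ∑_{i∈S} W_{ij}·(t + ∑_{k∉S} V_{ik}·r̃_k) for every j ∈ S; (b) W_{ij} ≥ 0 for all i, j ∈ S; (c) ∑_{i∈S} W_{ij} ≤ r̃_j/t for every j ∈ S; (d) if σ₀ > 0 and β₀ > 0 are such that r̃_i ≥ β₀/φ̃max for every i ∈ {1,…,n}, where φ̃max = max_{i} φ̃_i, then ∑_{i∈S} W_{ij}·|{k ∉ S : σ_{ik} ≥ σ₀}| ≤ (n·φ̃max/(β₀·σ₀²))·r̃_j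 for every j ∈ S. -/

import Mathlib

/-!
The restricted matrix `M = (Ψ⁻¹ - Vᵀ)_{S×S}` has nonpositive off-diagonal entries, and the master
equations say `Ψ⁻¹ r = t + Vᵀ r` and `Ψ⁻¹ r̃ = t + V r̃`. Restricting to `S` moves the terms with
`k ∉ S` to the right-hand side: `M r_S = b` and `r̃_S M = c` with `b, c ≥ t > 0`. A Z-matrix that
maps some positive vector to a positive vector satisfies a minimum principle (`M y ≥ 0 → y ≥ 0`),
hence is invertible with entrywise nonnegative inverse; this gives (a) and (b). Then
`r̃_j = ∑ᵢ W_ij c_i` with `W ≥ 0`, so (c) and (d) follow from `1 ≤ c_i / t` and from the counting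
bound `#{k ∉ S : σ_ik ≥ σ₀} · σ₀² β₀ / (n φ̃max) ≤ ∑_{k ∉ S} V_ik r̃_k ≤ c_i`.
-/

open Matrix

namespace Matrix

section ZMatrix

variable {ι 𝕜 : Type*} [Field 𝕜] [LinearOrder 𝕜] [IsStrictOrderedRing 𝕜]

lemma mulVec_nonneg [Fintype ι] {V : Matrix ι ι 𝕜} (hV : ∀ i j, 0 ≤ V i j) {x : ι → 𝕜}
    (hx : 0 ≤ x) : 0 ≤ V *ᵥ x :=
  fun i => Finset.sum_nonneg fun j _ => mul_nonneg (hV i j) (hx j)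

def IsZMatrix (M : Matrix ι ι 𝕜) : Prop := ∀ i j, i ≠ j → M i j ≤ 0

variable [Fintype ι]

namespace IsZMatrix

variable {M : Matrix ι ι 𝕜}

lemma mulVec_apply_nonpos (hM : M.IsZMatrix) {z : ι → 𝕜} (hz : 0 ≤ z) {i : ι}
    (hzi : z i = 0) : (M *ᵥ z) i ≤ 0 := by
  refine Finset.sum_nonpos fun k _ => ?_
  rcases eq_or_ne i k with rfl | hik
  · simp [hzi]
  · exact mul_nonpos_of_nonpos_of_nonneg (hM i k hik) (hz k)

/-- If `y` had a negative entry, then for `ρ = minₖ yₖ / xₖ < 0` the vector `y - ρ x` is `≥ 0`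
and vanishes at a minimising index, where `M` must then map it to something `≤ 0`; but there
`M *ᵥ (y - ρ x) = M *ᵥ y - ρ (M *ᵥ x) > 0`. -/
lemma nonneg_of_mulVec_nonneg (hM : M.IsZMatrix) {x : ι → 𝕜} (hx : ∀ i, 0 < x i)
    (hMx : ∀ i, 0 < (M *ᵥ x) i) {y : ι → 𝕜} (hMy : 0 ≤ M *ᵥ y) : 0 ≤ y := by
  intro i
  by_contra! hyi
  obtain ⟨i₀, -, hmin⟩ := Finset.univ.exists_min_image (fun k => y k / x k) ⟨i, by simp⟩
  set ρ := y i₀ / x i₀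
  have hρ : ρ < 0 := (hmin i (by simp)).trans_lt (div_neg_of_neg_of_pos hyi (hx i))
  have hz : 0 ≤ y - ρ • x := fun k => by
    simpa using (le_div_iff₀ (hx k)).1 (hmin k (by simp))
  have hz₀ : (y - ρ • x) i₀ = 0 := by simp [ρ, div_mul_cancel₀ _ (hx i₀).ne']
  have hle := hM.mulVec_apply_nonpos hz hz₀
  rw [mulVec_sub, mulVec_smul, Pi.sub_apply, Pi.smul_apply, smul_eq_mul] at hle
  have hMy₀ : 0 ≤ (M *ᵥ y) i₀ := hMy i₀
  nlinarith [mul_neg_of_neg_of_pos hρ (hMx i₀)]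

variable [DecidableEq ι]

lemma isUnit (hM : M.IsZMatrix) {x : ι → 𝕜} (hx : ∀ i, 0 < x i)
    (hMx : ∀ i, 0 < (M *ᵥ x) i) : IsUnit M := by
  refine mulVec_injective_iff_isUnit.1 fun v w hvw => ?_
  have h : M *ᵥ (v - w) = 0 := by rw [mulVec_sub, hvw, sub_self]
  have hvw : 0 ≤ v - w := hM.nonneg_of_mulVec_nonneg hx hMx h.ge
  have hwv : 0 ≤ w - v :=
    hM.nonneg_of_mulVec_nonneg hx hMx (by rw [← neg_sub, mulVec_neg, h, neg_zero])
  exact le_antisymm (sub_nonneg.1 hwv) (sub_nonneg.1 hvw)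

lemma inv_nonneg (hM : M.IsZMatrix) {x : ι → 𝕜} (hx : ∀ i, 0 < x i)
    (hMx : ∀ i, 0 < (M *ᵥ x) i) (i j : ι) : 0 ≤ M⁻¹ i j := by
  have hcol : M *ᵥ (fun k => M⁻¹ k j) = Pi.single j 1 := by
    ext k
    rw [show (M *ᵥ fun k => M⁻¹ k j) k = (M * M⁻¹) k j from rfl,
      mul_nonsing_inv M ((hM.isUnit hx hMx).map detMonoidHom), one_apply, Pi.single_apply]
  exact hM.nonneg_of_mulVec_nonneg hx hMx (hcol ▸ Pi.single_nonneg.2 zero_le_one) i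

end IsZMatrix

end ZMatrix

section PrincipalSubmatrix

variable {ι R : Type*} [Fintype ι] [DecidableEq ι] [CommRing R]

lemma submatrix_mulVec_restrict (N : Matrix ι ι R) (S : Finset ι) (x : ι → R) (i : S) :
    (N.submatrix (↑) (↑) *ᵥ fun j : S => x j) i = (N *ᵥ x) i - ∑ k ∈ Sᶜ, N i k * x k := by
  simp only [mulVec, dotProduct, submatrix_apply]
  rw [Finset.sum_coe_sort S (fun k => N i k * x k), ← Finset.sum_add_sum_compl S,
    add_sub_cancel_right]

lemma diagonal_sub_transpose_submatrix_mulVec (V : Matrix ι ι R) {d x : ι → R} {t : R}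
    (hx : ∀ i, d i * x i = t + (Vᵀ *ᵥ x) i) (S : Finset ι) (i : S) :
    ((diagonal d - Vᵀ).submatrix (↑) (↑) *ᵥ fun j : S => x j) i
      = t + ∑ k ∈ Sᶜ, V k i * x k := by
  have hcompl : ∀ k ∈ Sᶜ, (diagonal d - Vᵀ) i k * x k = -(V k i * x k) := fun k hk => by
    rw [sub_apply, diagonal_apply_ne _ fun h : (i : ι) = k => Finset.mem_compl.1 hk (h ▸ i.2),
      transpose_apply]
    ring
  rw [submatrix_mulVec_restrict, Finset.sum_congr rfl hcompl, Finset.sum_neg_distrib,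
    sub_mulVec, Pi.sub_apply, mulVec_diagonal, hx]
  ring

lemma vecMul_diagonal_sub_transpose_submatrix (V : Matrix ι ι R) {d y : ι → R} {t : R}
    (hy : ∀ i, d i * y i = t + (V *ᵥ y) i) (S : Finset ι) (j : S) :
    ((fun i : S => y i) ᵥ* (diagonal d - Vᵀ).submatrix (↑) (↑)) j
      = t + ∑ k ∈ Sᶜ, V j k * y k := by
  have := diagonal_sub_transpose_submatrix_mulVec Vᵀ (by simpa using hy) S j
  simpa [← mulVec_transpose, transpose_submatrix] using this

lemma eq_sum_inv_mul_of_mulVec_eq {M : Matrix ι ι R} (hM : IsUnit M.det) {x b : ι → R}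
    (h : M *ᵥ x = b) (i : ι) : x i = ∑ j, M⁻¹ i j * b j := by
  have hx : x = M⁻¹ *ᵥ b := by rw [← h, mulVec_mulVec, nonsing_inv_mul _ hM, one_mulVec]
  exact congrFun hx i

lemma eq_sum_inv_mul_of_vecMul_eq {M : Matrix ι ι R} (hM : IsUnit M.det) {y c : ι → R}
    (h : y ᵥ* M = c) (j : ι) : y j = ∑ i, M⁻¹ i j * c i := by
  have hy : y = c ᵥ* M⁻¹ := by rw [← h, vecMul_vecMul, mul_nonsing_inv _ hM, vecMul_one]
  rw [hy]
  simp only [vecMul, dotProduct, mul_comm]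

end PrincipalSubmatrix

section RestrictedSystem

variable {ι 𝕜 : Type*} [DecidableEq ι] [Field 𝕜] [LinearOrder 𝕜] [IsStrictOrderedRing 𝕜]
  {V : Matrix ι ι 𝕜} {d x : ι → 𝕜} {t : 𝕜}

lemma isZMatrix_submatrix_diagonal_sub_transpose (hV : ∀ i j, 0 ≤ V i j) (S : Finset ι) :
    ((diagonal d - Vᵀ).submatrix ((↑) : S → ι) ((↑) : S → ι)).IsZMatrix := fun i j hij => by
  rw [submatrix_apply, sub_apply, diagonal_apply_ne _ (Subtype.coe_ne_coe.2 hij),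
    transpose_apply, zero_sub, neg_nonpos]
  exact hV _ _

variable [Fintype ι]

lemma submatrix_diagonal_sub_transpose_mulVec_pos (hV : ∀ i j, 0 ≤ V i j) (ht : 0 < t)
    (hx : ∀ i, 0 < x i) (hfix : ∀ i, d i * x i = t + (Vᵀ *ᵥ x) i) (S : Finset ι) (i : S) :
    0 < ((diagonal d - Vᵀ).submatrix (↑) (↑) *ᵥ fun j : S => x j) i := by
  rw [diagonal_sub_transpose_submatrix_mulVec V hfix]
  exact add_pos_of_pos_of_nonneg ht
    (Finset.sum_nonneg fun k _ => mul_nonneg (hV _ _) (hx k).le)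

lemma isUnit_submatrix_diagonal_sub_transpose (hV : ∀ i j, 0 ≤ V i j) (ht : 0 < t)
    (hx : ∀ i, 0 < x i) (hfix : ∀ i, d i * x i = t + (Vᵀ *ᵥ x) i) (S : Finset ι) :
    IsUnit ((diagonal d - Vᵀ).submatrix ((↑) : S → ι) ((↑) : S → ι)) :=
  (isZMatrix_submatrix_diagonal_sub_transpose hV S).isUnit (fun i : S => hx i)
    (submatrix_diagonal_sub_transpose_mulVec_pos hV ht hx hfix S)

lemma inv_submatrix_diagonal_sub_transpose_nonneg (hV : ∀ i j, 0 ≤ V i j) (ht : 0 < t)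
    (hx : ∀ i, 0 < x i) (hfix : ∀ i, d i * x i = t + (Vᵀ *ᵥ x) i) (S : Finset ι) (i j : S) :
    0 ≤ ((diagonal d - Vᵀ).submatrix ((↑) : S → ι) ((↑) : S → ι))⁻¹ i j :=
  (isZMatrix_submatrix_diagonal_sub_transpose hV S).inv_nonneg (fun i : S => hx i)
    (submatrix_diagonal_sub_transpose_mulVec_pos hV ht hx hfix S) i j

end RestrictedSystem

end Matrix

lemma mul_eq_of_eq_div_of_ne_zero {G₀ : Type*} [GroupWithZero G₀] {x a b : G₀}
    (h : x = a / b) (hx : x ≠ 0) : x * b = a :=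
  (eq_div_iff (div_ne_zero_iff.1 (h ▸ hx)).2).1 h

section Counting

variable {ι 𝕜 : Type*} [Field 𝕜] [LinearOrder 𝕜] [IsStrictOrderedRing 𝕜]

lemma sum_mul_le_mul_sum_of_le (s : Finset ι) {w f c : ι → 𝕜} {K : 𝕜}
    (hw : ∀ i ∈ s, 0 ≤ w i) (hf : ∀ i ∈ s, f i ≤ K * c i) :
    ∑ i ∈ s, w i * f i ≤ K * ∑ i ∈ s, w i * c i := by
  rw [Finset.mul_sum]
  refine Finset.sum_le_sum fun i hi => ?_
  calc w i * f i ≤ w i * (K * c i) := mul_le_mul_of_nonneg_left (hf i hi) (hw i hi)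
    _ = K * (w i * c i) := by ring

lemma sum_le_sum_mul_div (s : Finset ι) {w c : ι → 𝕜} {t : 𝕜} (ht : 0 < t)
    (hw : ∀ i ∈ s, 0 ≤ w i) (hc : ∀ i ∈ s, t ≤ c i) :
    ∑ i ∈ s, w i ≤ (∑ i ∈ s, w i * c i) / t := by
  rw [div_eq_inv_mul]
  simpa using sum_mul_le_mul_sum_of_le s (f := 1) hw fun i hi => by
    rw [inv_mul_eq_div, Pi.one_apply, le_div_iff₀ ht, one_mul]; exact hc i hi

lemma card_filter_le_sum_sq_mul (T : Finset ι) {a y : ι → 𝕜} {σ β : 𝕜} (hσ : 0 ≤ σ)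
    (hβ : 0 ≤ β) (hy : ∀ k ∈ T, β ≤ y k) :
    ((T.filter (σ ≤ a ·)).card : 𝕜) * (σ ^ 2 * β) ≤ ∑ k ∈ T, a k ^ 2 * y k := by
  calc ((T.filter (σ ≤ a ·)).card : 𝕜) * (σ ^ 2 * β)
        = (T.filter (σ ≤ a ·)).card • (σ ^ 2 * β) := (nsmul_eq_mul _ _).symm
    _ ≤ ∑ k ∈ T.filter (σ ≤ a ·), a k ^ 2 * y k :=
        Finset.card_nsmul_le_sum _ _ _ fun k hk => by
          rw [Finset.mem_filter] at hk
          exact mul_le_mul (pow_le_pow_left₀ hσ hk.2 2) (hy k hk.1) hβ (sq_nonneg _)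
    _ ≤ ∑ k ∈ T, a k ^ 2 * y k :=
        Finset.sum_le_sum_of_subset_of_nonneg (Finset.filter_subset _ _)
          fun k hk _ => mul_nonneg (sq_nonneg _) (hβ.trans (hy k hk))

lemma card_filter_le_mul_add_sum (T : Finset ι) {a v y : ι → 𝕜} {m σ β φ t : 𝕜}
    (hv : ∀ k, v k = a k ^ 2 / m) (hm : 0 < m) (hσ : 0 < σ) (hβ : 0 < β) (hφ : 0 < φ)
    (ht : 0 ≤ t) (hy : ∀ k ∈ T, β / φ ≤ y k) :
    ((T.filter (σ ≤ a ·)).card : 𝕜) ≤ m * φ / (β * σ ^ 2) * (t + ∑ k ∈ T, v k * y k) := by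
  set N : 𝕜 := ((T.filter (σ ≤ a ·)).card : 𝕜)
  calc N = N * (σ ^ 2 * (β / φ)) * (φ / (β * σ ^ 2)) := by field_simp
    _ ≤ (∑ k ∈ T, a k ^ 2 * y k) * (φ / (β * σ ^ 2)) := by
        gcongr; exact card_filter_le_sum_sq_mul T hσ.le (div_pos hβ hφ).le hy
    _ = m * φ / (β * σ ^ 2) * ∑ k ∈ T, v k * y k := by
        rw [Finset.mul_sum, Finset.sum_mul]
        exact Finset.sum_congr rfl fun k _ => by rw [hv]; field_simp
    _ ≤ m * φ / (β * σ ^ 2) * (t + ∑ k ∈ T, v k * y k) := by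
        gcongr; exact le_add_of_nonneg_left ht

end Counting

theorem stmt_14_general (n : ℕ)
    (A : Matrix (Fin n) (Fin n) ℝ)
    (V : Matrix (Fin n) (Fin n) ℝ) (hV : ∀ i j, V i j = A i j ^ 2 / n)
    (s t : ℝ) (ht : 0 < t)
    (r rt : Fin n → ℝ) (hr : ∀ i, 0 < r i) (hrt : ∀ i, 0 < rt i)
    (heq1 : ∀ i, r i = (Vᵀ.mulVec r i + t) /
        (s ^ 2 + (V.mulVec rt i + t) * (Vᵀ.mulVec r i + t)))
    (heq2 : ∀ i, rt i = (V.mulVec rt i + t) /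
        (s ^ 2 + (V.mulVec rt i + t) * (Vᵀ.mulVec r i + t)))
    (φ φt ψ : Fin n → ℝ)
    (hφ : ∀ i, φ i = t + V.mulVec rt i) (hφt : ∀ i, φt i = t + Vᵀ.mulVec r i)
    (hψ : ∀ i, ψ i = 1 / (s ^ 2 + φ i * φt i))
    (S : Finset (Fin n))
    (M : Matrix {i // i ∈ S} {i // i ∈ S} ℝ)
    (hM : ∀ i j : {i // i ∈ S},
      M i j = (if (i : Fin n) = (j : Fin n) then 1 / ψ (i : Fin n) else 0)
        - V (j : Fin n) (i : Fin n)) :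
    IsUnit M ∧
    (∀ i : {i // i ∈ S},
      r (i : Fin n) = ∑ j : {i // i ∈ S},
        M⁻¹ i j * (t + ∑ k ∈ Sᶜ, V k (j : Fin n) * r k)) ∧
    (∀ j : {i // i ∈ S},
      rt (j : Fin n) = ∑ i : {i // i ∈ S},
        M⁻¹ i j * (t + ∑ k ∈ Sᶜ, V (i : Fin n) k * rt k)) ∧
    (∀ i j : {i // i ∈ S}, 0 ≤ M⁻¹ i j) ∧
    (∀ j : {i // i ∈ S}, ∑ i : {i // i ∈ S}, M⁻¹ i j ≤ rt (j : Fin n) / t) ∧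
    (∀ σ0 β0 φtmax : ℝ, 0 < σ0 → 0 < β0 →
      (∀ i, φt i ≤ φtmax) → (∃ i, φt i = φtmax) →
      (∀ i, β0 / φtmax ≤ rt i) →
      ∀ j : {i // i ∈ S},
        ∑ i : {i // i ∈ S},
            M⁻¹ i j * (((Sᶜ.filter fun k => σ0 ≤ A (i : Fin n) k).card : ℝ))
          ≤ ((n : ℝ) * φtmax / (β0 * σ0 ^ 2)) * rt (j : Fin n)) := by
  have hVnn : ∀ i j, 0 ≤ V i j := fun i j => by rw [hV]; positivity
  have hψinv : ∀ i, 1 / ψ i = s ^ 2 + ((V *ᵥ rt) i + t) * ((Vᵀ *ᵥ r) i + t) := fun i => by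
    rw [hψ, one_div_one_div, hφ, hφt, add_comm t, add_comm t]
  have hfix : ∀ i, 1 / ψ i * r i = t + (Vᵀ *ᵥ r) i := fun i => by
    rw [hψinv, mul_comm, mul_eq_of_eq_div_of_ne_zero (heq1 i) (hr i).ne', add_comm]
  have hfix' : ∀ i, 1 / ψ i * rt i = t + (V *ᵥ rt) i := fun i => by
    rw [hψinv, mul_comm, mul_eq_of_eq_div_of_ne_zero (heq2 i) (hrt i).ne', add_comm]
  obtain rfl : M = (diagonal (fun i => 1 / ψ i) - Vᵀ).submatrix (↑) (↑) := by
    ext i j; rw [hM, submatrix_apply, Matrix.sub_apply, diagonal_apply, transpose_apply]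
  have hunit := isUnit_submatrix_diagonal_sub_transpose hVnn ht hr hfix S
  have hdet : IsUnit (Matrix.det _) := hunit.map detMonoidHom
  have hrt_sum := eq_sum_inv_mul_of_vecMul_eq hdet
    (funext (vecMul_diagonal_sub_transpose_submatrix V hfix' S))
  have hW := inv_submatrix_diagonal_sub_transpose_nonneg hVnn ht hr hfix S
  refine ⟨hunit, eq_sum_inv_mul_of_mulVec_eq hdet
    (funext (diagonal_sub_transpose_submatrix_mulVec V hfix S)), hrt_sum, hW, fun j => ?_, ?_⟩
  · rw [hrt_sum j]
    exact sum_le_sum_mul_div _ ht (fun i _ => hW i j) fun i _ =>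
      le_add_of_nonneg_right (Finset.sum_nonneg fun k _ => mul_nonneg (hVnn _ _) (hrt k).le)
  · intro σ0 β0 φtmax hσ0 hβ0 hub _ hβ j
    have hφtmax : 0 < φtmax := by
      refine lt_of_lt_of_le ?_ (hub j)
      rw [hφt]
      exact add_pos_of_pos_of_nonneg ht
        (mulVec_nonneg (fun i k => hVnn k i) (fun k => (hr k).le) j)
    rw [hrt_sum j]
    exact sum_mul_le_mul_sum_of_le _ (fun i _ => hW i j) fun i _ =>
      card_filter_le_mul_add_sum _ (hV i) (Nat.cast_pos.2 (Fin.pos i.1)) hσ0 hβ0 hφtmax ht.le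
        fun k _ => hβ k

/-- properties of the matrix `W^S = (Ψ_{S×S}⁻¹ − V_{S×S}ᵀ)⁻¹`
associated to the Regularized Master Equations. -/
theorem stmt_14 (n : ℕ) (hn : 1 ≤ n)
    (A : Matrix (Fin n) (Fin n) ℝ) (hA : ∀ i j, 0 ≤ A i j)
    (V : Matrix (Fin n) (Fin n) ℝ) (hV : ∀ i j, V i j = A i j ^ 2 / n)
    (s t : ℝ) (hs : 0 < s) (ht : 0 < t)
    (r rt : Fin n → ℝ) (hr : ∀ i, 0 < r i) (hrt : ∀ i, 0 < rt i)
    (heq1 : ∀ i, r i = (Vᵀ.mulVec r i + t) /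
        (s ^ 2 + (V.mulVec rt i + t) * (Vᵀ.mulVec r i + t)))
    (heq2 : ∀ i, rt i = (V.mulVec rt i + t) /
        (s ^ 2 + (V.mulVec rt i + t) * (Vᵀ.mulVec r i + t)))
    (φ φt ψ : Fin n → ℝ)
    (hφ : ∀ i, φ i = t + V.mulVec rt i) (hφt : ∀ i, φt i = t + Vᵀ.mulVec r i)
    (hψ : ∀ i, ψ i = 1 / (s ^ 2 + φ i * φt i))
    (S : Finset (Fin n)) (hS : S.Nonempty)
    (M : Matrix {i // i ∈ S} {i // i ∈ S} ℝ)
    (hM : ∀ i j : {i // i ∈ S},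
      M i j = (if (i : Fin n) = (j : Fin n) then 1 / ψ (i : Fin n) else 0)
        - V (j : Fin n) (i : Fin n)) :
    IsUnit M ∧
    (∀ i : {i // i ∈ S},
      r (i : Fin n) = ∑ j : {i // i ∈ S},
        M⁻¹ i j * (t + ∑ k ∈ Sᶜ, V k (j : Fin n) * r k)) ∧
    (∀ j : {i // i ∈ S},
      rt (j : Fin n) = ∑ i : {i // i ∈ S},
        M⁻¹ i j * (t + ∑ k ∈ Sᶜ, V (i : Fin n) k * rt k)) ∧
    (∀ i j : {i // i ∈ S}, 0 ≤ M⁻¹ i j) ∧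
    (∀ j : {i // i ∈ S}, ∑ i : {i // i ∈ S}, M⁻¹ i j ≤ rt (j : Fin n) / t) ∧
    (∀ σ0 β0 φtmax : ℝ, 0 < σ0 → 0 < β0 →
      (∀ i, φt i ≤ φtmax) → (∃ i, φt i = φtmax) →
      (∀ i, β0 / φtmax ≤ rt i) →
      ∀ j : {i // i ∈ S},
        ∑ i : {i // i ∈ S},
            M⁻¹ i j * (((Sᶜ.filter fun k => σ0 ≤ A (i : Fin n) k).card : ℝ))
          ≤ ((n : ℝ) * φtmax / (β0 * σ0 ^ 2)) * rt (j : Fin n)) :=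
  stmt_14_general n A V hV s t ht r rt hr hrt heq1 heq2 φ φt ψ hφ hφt hψ S M hM
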